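/- Fix 0 < α < 1/2 and let p(x) = (1+α)/(2α(2−α)) + Σ_{k≥1} φ(x − e^k) where φ ∈ C_c^∞(ℝ), supp φ ⊂ [−1/2,1/2], 0 ≤ φ ≤ (5−8α+5α²)/(6α(1−α)(2−α)), φ equal to its max on [−1/4,1/4]. Let q be defined by 1/q = 1/p − α, B_k = [e^k − 1/4, e^k + 1/4], f = Σ_k k^{−3α(1−α)/(1+α)} χ_{B_k}. Then f ∈ L^{p(·)}(ℝ) (since ρ_{p(·)}(f) = (1/2)Σ_k k^{−(2−α)/(1+α)} < ∞), but M_α f ∉ L^{q(·)}(ℝ), so M_α is not bounded from L^{p(·)} to L^{q(·)}. -/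

import Mathlib

open MeasureTheory ENNReal Set

/-- The modular `ρ_{p(·)}(f) = ∫ |f(x)|^{p(x)} dx` (finite-valued exponent). -/
noncomputable def modular1 (p : ℝ → ℝ) (f : ℝ → ℝ) : ℝ≥0∞ :=
  ∫⁻ x, ENNReal.ofReal (|f x| ^ p x) ∂volume

/-- The modular for `ℝ≥0∞`-valued functions. -/
noncomputable def lmodular1 (q : ℝ → ℝ) (g : ℝ → ℝ≥0∞) : ℝ≥0∞ :=
  ∫⁻ x, g x ^ q x ∂volume

/-- The Luxemburg norm (in `ℝ≥0∞`) of an `ℝ≥0∞`-valued function. -/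
noncomputable def lnorm1 (q : ℝ → ℝ) (g : ℝ → ℝ≥0∞) : ℝ≥0∞ :=
  sInf {l : ℝ≥0∞ | lmodular1 q (fun x => g x / l) ≤ 1}

/-- The Luxemburg norm of a real function. -/
noncomputable def vnorm1 (p : ℝ → ℝ) (f : ℝ → ℝ) : ℝ≥0∞ :=
  lnorm1 p fun x => ENNReal.ofReal |f x|

/-- The fractional maximal operator on `ℝ`:
`M_α f(x) = sup_{I ∋ x} |I|^{α−1} ∫_I |f|` over intervals `I` containing `x`. -/
noncomputable def fracMax1 (α : ℝ) (f : ℝ → ℝ) (x : ℝ) : ℝ≥0∞ :=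
  ⨆ (c : ℝ) (r : ℝ) (_ : 0 < r) (_ : x ∈ Set.Icc (c - r) (c + r)),
    ENNReal.ofReal ((2 * r) ^ (α - 1) * ∫ y in Set.Icc (c - r) (c + r), |f y| ∂volume)

set_option maxHeartbeats 2000000 in
/-- Fix `0 < α < 1/2` and let
`p(x) = (1+α)/(2α(2−α)) + Σ_{k≥1} φ(x − e^k)` with `φ ∈ C_c^∞(ℝ)`,
`supp φ ⊆ [−1/2,1/2]`, `0 ≤ φ ≤ (5−8α+5α²)/(6α(1−α)(2−α))`, `φ` equal to its maximum on
`[−1/4,1/4]`. Let `q` satisfy `1/q = 1/p − α`, `B_k = [e^k − 1/4, e^k + 1/4]`, and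
`f = Σ_k k^{−3α(1−α)/(1+α)} χ_{B_k}`. Then `f ∈ L^{p(·)}(ℝ)` but `M_α f ∉ L^{q(·)}(ℝ)`,
so `M_α` is not bounded from `L^{p(·)}` to `L^{q(·)}`. -/
theorem stmt17 (α : ℝ) (h0 : 0 < α) (hα : α < 1 / 2)
    (φ : ℝ → ℝ) (hφsm : ContDiff ℝ (⊤ : ℕ∞) φ) (hφc : HasCompactSupport φ)
    (hφsupp : Function.support φ ⊆ Set.Icc (-(1 / 2)) (1 / 2))
    (hφ0 : ∀ x, 0 ≤ φ x)
    (hφub : ∀ x, φ x ≤ (5 - 8 * α + 5 * α ^ 2) / (6 * α * (1 - α) * (2 - α)))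
    (hφmax : ∀ x ∈ Set.Icc (-(1 / 4)) (1 / 4),
      φ x = (5 - 8 * α + 5 * α ^ 2) / (6 * α * (1 - α) * (2 - α)))
    (p q : ℝ → ℝ)
    (hp : ∀ x, p x = (1 + α) / (2 * α * (2 - α)) + ∑' k : ℕ, φ (x - Real.exp (k + 1)))
    (hq : ∀ x, 1 / q x = 1 / p x - α)
    (f : ℝ → ℝ)
    (hf : ∀ x, f x = ∑' k : ℕ, ((k : ℝ) + 1) ^ (-(3 * α * (1 - α) / (1 + α)))
      * Set.indicator (Set.Icc (Real.exp (k + 1) - 1 / 4) (Real.exp (k + 1) + 1 / 4))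
          (fun _ => (1 : ℝ)) x) :
    (∃ l : ℝ, 0 < l ∧ modular1 p (fun x => f x / l) < ∞)
      ∧ (∀ l : ℝ, 0 < l →
          lmodular1 q (fun x => fracMax1 α f x / ENNReal.ofReal l) = ∞)
      ∧ ¬ ∃ C : ℝ≥0∞, C ≠ ∞ ∧ ∀ g : ℝ → ℝ,
          lnorm1 q (fracMax1 α g) ≤ C * vnorm1 p g := by
  have hα1 : α < 1 := by linarith
  have h1mα : 0 < 1 - α := by linarith
  have h2mα : 0 < 2 - α := by linarith
  have h1pα : 0 < 1 + α := by linarith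
  obtain ⟨b, hbdef⟩ : ∃ b : ℝ, b = (1 + α) / (2 * α * (2 - α)) := ⟨_, rfl⟩
  obtain ⟨M, hMdef⟩ : ∃ M : ℝ, M = (5 - 8 * α + 5 * α ^ 2) / (6 * α * (1 - α) * (2 - α)) := ⟨_, rfl⟩
  obtain ⟨P, hPdef⟩ : ∃ P : ℝ, P = (2 - α) / (3 * α * (1 - α)) := ⟨_, rfl⟩
  obtain ⟨Q, hQdef⟩ : ∃ Q : ℝ, Q = (1 + α) / (3 * α * (1 - α)) := ⟨_, rfl⟩
  obtain ⟨t, htdef⟩ : ∃ t : ℝ, t = 3 * α * (1 - α) / (1 + α) := ⟨_, rfl⟩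
  have hbpos : 0 < b := by rw [hbdef]; positivity
  have h5 : 0 < 5 - 8*α + 5*α^2 := by nlinarith
  have hMpos : 0 < M := by rw [hMdef]; positivity
  have hPpos : 0 < P := by rw [hPdef]; positivity
  have hQpos : 0 < Q := by rw [hQdef]; positivity
  have htpos : 0 < t := by rw [htdef]; positivity
  have hbM : b + M = P := by rw [hbdef, hMdef, hPdef]; field_simp; ring
  have htP : t * P = (2 - α) / (1 + α) := by rw [htdef, hPdef]; field_simp
  have htQ : t * Q = 1 := by rw [htdef, hQdef]; field_simp
  obtain ⟨E, hE⟩ : ∃ E : ℕ → ℝ, ∀ k : ℕ, E k = Real.exp ((k : ℝ) + 1) := ⟨_, fun _ => rfl⟩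
  have hEgap : ∀ j k : ℕ, j < k → E j + 4 ≤ E k := by
    intro j k hjk
    have h1 : E (j+1) ≤ E k := by
      rw [hE, hE]; apply Real.exp_le_exp.mpr
      have : (j:ℝ) + 1 ≤ k := by exact_mod_cast hjk
      push_cast; linarith
    have h2 : E (j+1) = E j * Real.exp 1 := by
      rw [hE, hE, ← Real.exp_add]; push_cast; ring_nf
    have h3 : Real.exp 1 ≤ E j := by
      rw [hE]; apply Real.exp_le_exp.mpr
      have := Nat.cast_nonneg (α := ℝ) j; linarith
    have he : (2.7182818283 : ℝ) < Real.exp 1 := Real.exp_one_gt_d9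
    nlinarith [h3, he]
  have hsep : ∀ (x : ℝ) (j k : ℕ), j ≠ k → |x - E j| ≤ 3/2 → 3/2 < |x - E k| := by
    intro x j k hjk hxj
    have hgap : 4 ≤ |E j - E k| := by
      rcases hjk.lt_or_gt with h | h
      · have := hEgap j k h; rw [abs_sub_comm, abs_of_nonneg (by linarith)]; linarith
      · have := hEgap k j h; rw [abs_of_nonneg (by linarith)]; linarith
    have htri : |E j - E k| ≤ |E j - x| + |x - E k| := abs_sub_le _ _ _
    rw [abs_sub_comm (E j) x] at htri
    linarith
  obtain ⟨a, ha⟩ : ∃ a : ℕ → ℝ, ∀ k : ℕ, a k = ((k:ℝ)+1) ^ (-t) := ⟨_, fun _ => rfl⟩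
  obtain ⟨B, hB⟩ : ∃ B : ℕ → Set ℝ, ∀ k : ℕ, B k = Icc (E k - 1/4) (E k + 1/4) := ⟨_, fun _ => rfl⟩
  obtain ⟨D, hD⟩ : ∃ D : ℕ → Set ℝ, ∀ k : ℕ, D k = Icc (E k + 3/4) (E k + 3/2) := ⟨_, fun _ => rfl⟩
  have hanonneg : ∀ k, 0 ≤ a k := fun k => by rw [ha]; positivity
  -- transported hypotheses
  have hp' : ∀ x, p x = b + ∑' k : ℕ, φ (x - E k) := by
    intro x; rw [hp x, hbdef]; congr 1; exact tsum_congr fun k => by rw [hE]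
  have hf' : ∀ x, f x = ∑' k : ℕ, a k * (B k).indicator (fun _ => (1:ℝ)) x := by
    intro x; rw [hf x]; exact tsum_congr fun k => by rw [ha, hB, hE, htdef]
  -- membership
  have hmemB : ∀ (k : ℕ) (x : ℝ), x ∈ B k ↔ |x - E k| ≤ 1/4 := by
    intro k x; rw [hB, Set.mem_Icc, abs_le]; constructor <;> rintro ⟨h1, h2⟩ <;> constructor <;> linarith
  have hmemD : ∀ (k : ℕ) (x : ℝ), x ∈ D k → 3/4 ≤ x - E k ∧ x - E k ≤ 3/2 := by
    intro k x hx; rw [hD, Set.mem_Icc] at hx; constructor <;> linarith [hx.1, hx.2]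
  -- φ vanishing
  have hφzero : ∀ (x : ℝ) (k : ℕ), 1/2 < |x - E k| → φ (x - E k) = 0 := by
    intro x k h
    by_contra hne
    have hin := hφsupp (Function.mem_support.mpr hne)
    rw [Set.mem_Icc] at hin
    have : |x - E k| ≤ 1/2 := abs_le.mpr ⟨by linarith [hin.1], hin.2⟩
    linarith
  -- tsum of φ shifts
  have htsum_single : ∀ (x : ℝ) (k : ℕ), |x - E k| ≤ 3/2 →
      (∑' j : ℕ, φ (x - E j)) = φ (x - E k) := by
    intro x k hk
    exact tsum_eq_single k fun j hj => hφzero x j (by linarith [hsep x k j (Ne.symm hj) hk])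
  have htsum_zero : ∀ x : ℝ, (∀ k : ℕ, ¬ |x - E k| ≤ 3/2) → (∑' j : ℕ, φ (x - E j)) = 0 := by
    intro x hx
    have : (fun j : ℕ => φ (x - E j)) = fun _ => 0 := by
      funext j; exact hφzero x j (by push_neg at hx; linarith [hx j])
    rw [this, tsum_zero]
  have htsum_nonneg : ∀ x : ℝ, 0 ≤ ∑' j : ℕ, φ (x - E j) :=
    fun x => tsum_nonneg fun j => hφ0 _
  have htsum_le : ∀ x : ℝ, (∑' j : ℕ, φ (x - E j)) ≤ M := by
    intro x
    by_cases hx : ∃ k, |x - E k| ≤ 3/2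
    · obtain ⟨k, hk⟩ := hx
      rw [htsum_single x k hk, hMdef]; exact hφub _
    · push_neg at hx
      rw [htsum_zero x (fun k => by linarith [hx k])]
      exact hMpos.le
  -- p bounds and values
  have hpb : ∀ x, b ≤ p x := fun x => by rw [hp' x]; linarith [htsum_nonneg x]
  have hpP : ∀ x, p x ≤ P := fun x => by rw [hp' x]; linarith [htsum_le x]
  have hppos : ∀ x, 0 < p x := fun x => lt_of_lt_of_le hbpos (hpb x)
  have hpB : ∀ (k : ℕ) (x : ℝ), x ∈ B k → p x = P := by
    intro k x hx
    have hk : |x - E k| ≤ 1/4 := (hmemB k x).mp hx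
    rw [hp' x, htsum_single x k (by linarith), hφmax _ (by rw [Set.mem_Icc]; rcases abs_le.mp hk with ⟨h1, h2⟩; constructor <;> linarith), ← hMdef]
    exact hbM
  have hpD : ∀ (k : ℕ) (x : ℝ), x ∈ D k → p x = b := by
    intro k x hx
    obtain ⟨h1, h2⟩ := hmemD k x hx
    have hk : |x - E k| ≤ 3/2 := abs_le.mpr ⟨by linarith, h2⟩
    rw [hp' x, htsum_single x k hk, hφzero x k (by rw [abs_of_nonneg (by linarith)]; linarith), add_zero]
  -- q values
  have hqpos : ∀ x, 0 < q x := by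
    intro x
    have h1 : α < 1 / P := by
      rw [hPdef, one_div_div]
      rw [lt_div_iff₀ h2mα]; nlinarith
    have h2 : 1 / P ≤ 1 / p x := one_div_le_one_div_of_le (hppos x) (hpP x)
    have := hq x
    have h3 : 0 < 1 / q x := by rw [this]; linarith
    exact one_div_pos.mp h3
  have hqD : ∀ (k : ℕ) (x : ℝ), x ∈ D k → q x = Q := by
    intro k x hx
    have h1 : 1 / q x = 1 / Q := by
      rw [hq x, hpD k x hx, hbdef, hQdef]; field_simp; ring
    have h2 : (q x)⁻¹ = Q⁻¹ := by rw [← one_div, ← one_div, h1]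
    exact inv_injective h2
  -- f values
  have hfB : ∀ (k : ℕ) (x : ℝ), x ∈ B k → f x = a k := by
    intro k x hx
    rw [hf' x]
    rw [tsum_eq_single k]
    · rw [Set.indicator_of_mem hx, mul_one]
    · intro j hj
      have hk : |x - E k| ≤ 3/2 := by linarith [(hmemB k x).mp hx]
      have : ¬ (x ∈ B j) := fun hxj => by
        have := (hmemB j x).mp hxj
        linarith [hsep x k j (Ne.symm hj) hk]
      rw [Set.indicator_of_notMem this, mul_zero]
  have hfO : ∀ x : ℝ, (∀ k : ℕ, x ∉ B k) → f x = 0 := by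
    intro x hx
    rw [hf' x]
    have : (fun k : ℕ => a k * (B k).indicator (fun _ => (1:ℝ)) x) = fun _ => 0 := by
      funext k; rw [Set.indicator_of_notMem (hx k), mul_zero]
    rw [this, tsum_zero]
  have hfnn : ∀ x, 0 ≤ f x := by
    intro x
    by_cases hx : ∃ k, x ∈ B k
    · obtain ⟨k, hk⟩ := hx; rw [hfB k x hk]; exact hanonneg k
    · push_neg at hx; rw [hfO x hx]
  -- PART 1 core: finite modular
  have hBmeas : ∀ k : ℕ, MeasurableSet (B k) := fun k => by rw [hB]; exact measurableSet_Icc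
  have hvolB : ∀ k : ℕ, volume (B k) = ENNReal.ofReal (1/2) := by
    intro k; rw [hB, Real.volume_Icc]; congr 1; ring
  have hA : (∫⁻ x, ENNReal.ofReal (|f x| ^ p x)) < ⊤ := by
    have hbound : ∀ x, ENNReal.ofReal (|f x| ^ p x)
        ≤ ∑' k : ℕ, (B k).indicator (fun _ => ENNReal.ofReal ((a k) ^ P)) x := by
      intro x
      by_cases hx : ∃ k, x ∈ B k
      · obtain ⟨k, hk⟩ := hx
        rw [hfB k x hk, hpB k x hk, abs_of_nonneg (hanonneg k)]
        have h1 : (B k).indicator (fun _ => ENNReal.ofReal ((a k) ^ P)) x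
            = ENNReal.ofReal ((a k) ^ P) := Set.indicator_of_mem hk _
        exact h1 ▸ ENNReal.le_tsum k
      · push_neg at hx
        rw [hfO x hx, abs_zero, Real.zero_rpow (ne_of_gt (hppos x))]
        simp
    calc (∫⁻ x, ENNReal.ofReal (|f x| ^ p x))
        ≤ ∫⁻ x, ∑' k : ℕ, (B k).indicator (fun _ => ENNReal.ofReal ((a k) ^ P)) x :=
          lintegral_mono hbound
      _ = ∑' k : ℕ, ∫⁻ x, (B k).indicator (fun _ => ENNReal.ofReal ((a k) ^ P)) x :=
          lintegral_tsum fun k => ((measurable_const.indicator (hBmeas k)).aemeasurable)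
      _ = ∑' k : ℕ, ENNReal.ofReal ((a k) ^ P) * volume (B k) := by
          refine tsum_congr fun k => ?_
          rw [lintegral_indicator (hBmeas k), setLIntegral_const]
      _ = (∑' k : ℕ, ENNReal.ofReal ((a k) ^ P)) * ENNReal.ofReal (1/2) := by
          rw [← ENNReal.tsum_mul_right]; exact tsum_congr fun k => by rw [hvolB k]
      _ < ⊤ := by
          apply ENNReal.mul_lt_top _ (by simp)
          have haP : ∀ k : ℕ, (a k) ^ P = ((k:ℝ)+1) ^ (-(t*P)) := by
            intro k
            rw [ha, ← Real.rpow_mul (by positivity), neg_mul]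
          have hs1 : 1 < t * P := by rw [htP]; rw [one_lt_div h1pα]; linarith
          have hsumm : Summable (fun k : ℕ => ((k:ℝ)+1) ^ (-(t*P))) := by
            have h1 : Summable (fun n : ℕ => (n:ℝ) ^ (-(t*P))) :=
              Real.summable_nat_rpow.mpr (by linarith)
            have h2 := (summable_nat_add_iff (f := fun n : ℕ => (n:ℝ) ^ (-(t*P))) 1).mpr h1
            refine h2.congr fun n => ?_
            push_cast; ring_nf
          have : (∑' k : ℕ, ENNReal.ofReal ((a k) ^ P))
              = ENNReal.ofReal (∑' k : ℕ, ((k:ℝ)+1) ^ (-(t*P))) := by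
            rw [ENNReal.ofReal_tsum_of_nonneg (fun k => by positivity) hsumm]
            exact tsum_congr fun k => by rw [haP k]
          rw [this]; exact ofReal_lt_top
  -- PART 2
  obtain ⟨c₀, hc₀def⟩ : ∃ c₀ : ℝ, c₀ = (3:ℝ) ^ (α - 1) * (1/2) := ⟨_, rfl⟩
  have hc₀pos : 0 < c₀ := by rw [hc₀def]; positivity
  have hint : ∀ k : ℕ, (∫ y in Icc (E k - 3/2) (E k + 3/2), |f y|) = a k * (1/2) := by
    intro k
    have hcong : Set.EqOn (fun y => |f y|) ((B k).indicator (fun _ => a k))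
        (Icc (E k - 3/2) (E k + 3/2)) := by
      intro y hy
      rw [Set.mem_Icc] at hy
      by_cases hyB : y ∈ B k
      · simp only [Set.indicator_of_mem hyB, hfB k y hyB, abs_of_nonneg (hanonneg k)]
      · simp only [Set.indicator_of_notMem hyB]
        have : ∀ j : ℕ, y ∉ B j := by
          intro j hyj
          by_cases hjk : j = k
          · exact hyB (hjk ▸ hyj)
          · have hyk : |y - E k| ≤ 3/2 := abs_le.mpr ⟨by linarith [hy.1], by linarith [hy.2]⟩
            linarith [hsep y k j (fun h => hjk h.symm) hyk, (hmemB j y).mp hyj]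
        rw [hfO y this, abs_zero]
    rw [setIntegral_congr_fun measurableSet_Icc hcong,
      setIntegral_indicator (hBmeas k)]
    have hBsub : Icc (E k - 3/2) (E k + 3/2) ∩ B k = B k := by
      apply Set.inter_eq_self_of_subset_right
      rw [hB]; exact Set.Icc_subset_Icc (by linarith) (by linarith)
    rw [hBsub, setIntegral_const, Measure.real, hvolB k, smul_eq_mul,
      ENNReal.toReal_ofReal (by norm_num)]
    ring
  have hMαlb : ∀ (k : ℕ) (x : ℝ), x ∈ D k →
      ENNReal.ofReal (c₀ * a k) ≤ fracMax1 α f x := by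
    intro k x hx
    obtain ⟨h1, h2⟩ := hmemD k x hx
    rw [fracMax1]
    refine le_iSup_of_le (E k) (le_iSup_of_le (3/2 : ℝ) (le_iSup_of_le (by norm_num)
      (le_iSup_of_le (Set.mem_Icc.mpr ⟨by linarith, by linarith⟩) (le_of_eq ?_))))
    rw [hint k]
    congr 1
    rw [hc₀def]
    norm_num
    ring
  have hDmeas : ∀ k : ℕ, MeasurableSet (D k) := fun k => by rw [hD]; exact measurableSet_Icc
  have hvolD : ∀ k : ℕ, volume (D k) = ENNReal.ofReal (3/4) := by
    intro k; rw [hD, Real.volume_Icc]; congr 1; ring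
  have hDdisj : Pairwise (Function.onFun Disjoint D) := by
    intro j k hjk
    rw [Function.onFun, hD, hD]
    rcases hjk.lt_or_gt with h | h
    · have := hEgap j k h
      apply Set.disjoint_left.mpr
      intro x hx1 hx2
      rw [Set.mem_Icc] at hx1 hx2
      linarith [hx1.2, hx2.1]
    · have := hEgap k j h
      apply Set.disjoint_left.mpr
      intro x hx1 hx2
      rw [Set.mem_Icc] at hx1 hx2
      linarith [hx1.1, hx2.2]
  have hpart2 : ∀ l : ℝ, 0 < l →
      lmodular1 q (fun x => fracMax1 α f x / ENNReal.ofReal l) = ∞ := by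
    intro l hl
    have hDlb : ∀ (k : ℕ) (x : ℝ), x ∈ D k →
        ENNReal.ofReal ((c₀/l) ^ Q) * ENNReal.ofReal (((k:ℝ)+1)⁻¹)
          ≤ (fracMax1 α f x / ENNReal.ofReal l) ^ q x := by
      intro k x hx
      rw [hqD k x hx]
      calc ENNReal.ofReal ((c₀/l) ^ Q) * ENNReal.ofReal (((k:ℝ)+1)⁻¹)
          = ENNReal.ofReal ((c₀ * a k / l) ^ Q) := by
            rw [← ENNReal.ofReal_mul (by positivity)]
            congr 1
            have hak : (a k) ^ Q = ((k:ℝ)+1)⁻¹ := by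
              rw [ha, ← Real.rpow_mul (by positivity), neg_mul, htQ, Real.rpow_neg_one]
            rw [← hak, ← Real.mul_rpow (by positivity) (hanonneg k)]
            congr 1
            field_simp
        _ = (ENNReal.ofReal (c₀ * a k) / ENNReal.ofReal l) ^ Q := by
            rw [← ENNReal.ofReal_div_of_pos hl, ENNReal.ofReal_rpow_of_nonneg (div_nonneg (mul_nonneg hc₀pos.le (hanonneg k)) hl.le) hQpos.le]
        _ ≤ (fracMax1 α f x / ENNReal.ofReal l) ^ Q :=
            ENNReal.rpow_le_rpow (ENNReal.div_le_div_right (hMαlb k x hx) _) hQpos.le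
    rw [lmodular1]
    rw [eq_top_iff]
    calc (⊤ : ℝ≥0∞)
        = ∑' k : ℕ, ENNReal.ofReal ((c₀/l) ^ Q) * ENNReal.ofReal (((k:ℝ)+1)⁻¹)
            * ENNReal.ofReal (3/4) := by
          rw [eq_comm]
          have : ∀ k : ℕ, ENNReal.ofReal ((c₀/l) ^ Q) * ENNReal.ofReal (((k:ℝ)+1)⁻¹)
              * ENNReal.ofReal (3/4)
              = (ENNReal.ofReal ((c₀/l) ^ Q) * ENNReal.ofReal (3/4))
                * ENNReal.ofReal (((k:ℝ)+1)⁻¹) := fun k => by ring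
          rw [tsum_congr this, ENNReal.tsum_mul_left]
          have hharm : (∑' k : ℕ, ENNReal.ofReal (((k:ℝ)+1)⁻¹)) = ⊤ := by
            by_contra hne
            have hsum := ENNReal.summable_toReal hne
            have hsum2 : Summable (fun k : ℕ => ((k:ℝ)+1)⁻¹) := by
              refine hsum.congr fun k => ?_
              rw [ENNReal.toReal_ofReal (by positivity)]
            have hsum3 : Summable (fun n : ℕ => (n:ℝ)⁻¹) := by
              rw [← summable_nat_add_iff 1]
              refine hsum2.congr fun n => ?_
              push_cast; ring_nf
            exact Real.not_summable_natCast_inv hsum3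
          rw [hharm, ENNReal.mul_top]
          intro hzero
          rw [mul_eq_zero] at hzero
          rcases hzero with h | h <;> rw [ENNReal.ofReal_eq_zero] at h <;> nlinarith [Real.rpow_pos_of_pos (div_pos hc₀pos hl) Q]
      _ ≤ ∑' k : ℕ, ∫⁻ x in D k, (fracMax1 α f x / ENNReal.ofReal l) ^ q x := by
          refine ENNReal.tsum_le_tsum fun k => ?_
          have h1 : ENNReal.ofReal ((c₀/l) ^ Q) * ENNReal.ofReal (((k:ℝ)+1)⁻¹)
              * ENNReal.ofReal (3/4)
              = ∫⁻ _ in D k, ENNReal.ofReal ((c₀/l) ^ Q) * ENNReal.ofReal (((k:ℝ)+1)⁻¹) := by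
            rw [setLIntegral_const, hvolD k]
          rw [h1]
          exact setLIntegral_mono' (hDmeas k) (fun x hx => hDlb k x hx)
      _ = ∫⁻ x in ⋃ k : ℕ, D k, (fracMax1 α f x / ENNReal.ofReal l) ^ q x :=
          (lintegral_iUnion hDmeas hDdisj _).symm
      _ ≤ ∫⁻ x, (fracMax1 α f x / ENNReal.ofReal l) ^ q x :=
          setLIntegral_le_lintegral _ _
  -- PART 3: vnorm finiteness
  have hvnorm : vnorm1 p f ≠ ⊤ := by
    obtain ⟨A, hAdef⟩ : ∃ A : ℝ≥0∞, A = ∫⁻ x, ENNReal.ofReal (|f x| ^ p x) := ⟨_, rfl⟩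
    have hAtop : A ≠ ⊤ := by rw [hAdef]; exact hA.ne
    obtain ⟨lam, hlamdef⟩ : ∃ lam : ℝ, lam = max 1 ((A.toReal + 1) ^ (1 / b)) := ⟨_, rfl⟩
    have hlam1 : 1 ≤ lam := by rw [hlamdef]; exact le_max_left _ _
    have hlampos : 0 < lam := lt_of_lt_of_le one_pos hlam1
    have hAnn : (0:ℝ) ≤ A.toReal := ENNReal.toReal_nonneg
    have hlampow : A.toReal + 1 ≤ lam ^ b := by
      have h1 : (A.toReal + 1) ^ (1 / b) ≤ lam := by rw [hlamdef]; exact le_max_right _ _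
      have h2 := Real.rpow_le_rpow (by positivity) h1 hbpos.le
      rwa [← Real.rpow_mul (by positivity), one_div_mul_cancel hbpos.ne', Real.rpow_one] at h2
    have hkey : lmodular1 p (fun x => ENNReal.ofReal |f x| / ENNReal.ofReal lam) ≤ 1 := by
      have hpt : ∀ x, (ENNReal.ofReal |f x| / ENNReal.ofReal lam) ^ p x
          ≤ ENNReal.ofReal ((A.toReal + 1)⁻¹) * ENNReal.ofReal (|f x| ^ p x) := by
        intro x
        rw [← ENNReal.ofReal_div_of_pos hlampos,
          ENNReal.ofReal_rpow_of_nonneg (by positivity) (hppos x).le,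
          ← ENNReal.ofReal_mul (by positivity)]
        apply ENNReal.ofReal_le_ofReal
        rw [Real.div_rpow (abs_nonneg _) hlampos.le]
        have hlb : A.toReal + 1 ≤ lam ^ p x := by
          calc A.toReal + 1 ≤ lam ^ b := hlampow
            _ ≤ lam ^ p x := Real.rpow_le_rpow_of_exponent_le hlam1 (hpb x)
        calc |f x| ^ p x / lam ^ p x ≤ |f x| ^ p x / (A.toReal + 1) := by
              apply div_le_div_of_nonneg_left (by positivity) (by positivity) hlb
          _ = (A.toReal + 1)⁻¹ * |f x| ^ p x := by ring
      calc lmodular1 p (fun x => ENNReal.ofReal |f x| / ENNReal.ofReal lam)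
          ≤ ∫⁻ x, ENNReal.ofReal ((A.toReal + 1)⁻¹) * ENNReal.ofReal (|f x| ^ p x) := by
            rw [lmodular1]; exact lintegral_mono hpt
        _ = ENNReal.ofReal ((A.toReal + 1)⁻¹) * A := by
            rw [lintegral_const_mul' _ _ ENNReal.ofReal_ne_top, hAdef]
        _ ≤ 1 := by
            have h2 : (A.toReal + 1)⁻¹ * A.toReal ≤ (A.toReal + 1)⁻¹ * (A.toReal + 1) :=
              mul_le_mul_of_nonneg_left (by linarith) (by positivity)
            rw [inv_mul_cancel₀ (by positivity)] at h2
            calc ENNReal.ofReal ((A.toReal + 1)⁻¹) * A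
                = ENNReal.ofReal ((A.toReal + 1)⁻¹) * ENNReal.ofReal A.toReal := by
                  rw [ENNReal.ofReal_toReal hAtop]
              _ = ENNReal.ofReal ((A.toReal + 1)⁻¹ * A.toReal) :=
                  (ENNReal.ofReal_mul (by positivity)).symm
              _ ≤ 1 := ENNReal.ofReal_le_one.mpr h2
    have : vnorm1 p f ≤ ENNReal.ofReal lam := by
      rw [vnorm1, lnorm1]
      exact sInf_le hkey
    intro h
    rw [h] at this
    exact absurd (top_le_iff.mp this) ENNReal.ofReal_ne_top
  -- PART 3: lnorm infinite
  have hlnorm : lnorm1 q (fracMax1 α f) = ⊤ := by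
    rw [lnorm1, sInf_eq_top]
    intro lE hlE
    by_contra hne
    rcases eq_or_ne lE 0 with h0E | h0E
    · -- l = 0 case
      have hmono : lmodular1 q (fun x => fracMax1 α f x / ENNReal.ofReal 1)
          ≤ lmodular1 q (fun x => fracMax1 α f x / lE) := by
        rw [lmodular1, lmodular1]
        apply lintegral_mono
        intro x
        apply ENNReal.rpow_le_rpow _ (hqpos x).le
        rw [h0E]
        apply ENNReal.div_le_div_left
        simp
      rw [hpart2 1 one_pos] at hmono
      rw [Set.mem_setOf_eq] at hlE
      exact absurd (hmono.trans hlE) (by simp)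
    · have hpos : 0 < lE.toReal := ENNReal.toReal_pos h0E hne
      have := hpart2 lE.toReal hpos
      rw [ENNReal.ofReal_toReal hne] at this
      rw [Set.mem_setOf_eq, this] at hlE
      exact absurd hlE (by simp)
  refine ⟨⟨1, one_pos, ?_⟩, hpart2, ?_⟩
  · simpa only [modular1, div_one] using hA
  · rintro ⟨C, hC, hbd⟩
    have h := hbd f
    rw [hlnorm] at h
    exact absurd (top_le_iff.mp h) (ENNReal.mul_ne_top hC hvnorm)
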